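/- arXiv:1411.6148 — 5 statements merged into one kernel-verified Lean document; each statement's English description precedes it below -/
import Mathlib

section
/- Let n' ≥ 1 be an integer, let β, σ, c₁ > 0, let 0 < ε ≤ 1, and set γ = (e^ε − 1)/(e^ε + 1). Let f be a probability density function on ℝ satisfying sup_{x∈ℝ} |f(x) − φ(x)| ≤ c₁/√n', where φ is the standard normal density. Suppose w ∈ ℝ satisfies |w| + 4β/(σ√n') ≤ √(2·ln(γ√n'/(c₁√(2π)))). Then for all a, b ∈ ℝ with |a| ≤ 4β/σ and |b| ≤ 4β/σ: f(w − a/√n') ≤ exp(ε + (8β/(σ√n'))·√(2·ln(γ√n'/(c₁√(2π))))) · f(w − b/√n'). -/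
/-!
The threshold `T = √(2 log X)`, `X = γ√n'/(c₁√(2π))`, is chosen so that `φ(T) = c₁/(γ√n')`.
On `[-T, T]` the Gaussian is at least `φ(T)`, so there the uniform error `c₁/√n'` is a relative
error of at most `γ`: `(1 - γ) φ ≤ f ≤ (1 + γ) φ`, and `(1 + γ)/(1 - γ) = e^ε`. Both evaluation
points lie in `[-T, T]` at distance at most `8β/(σ√n')`, and there
`φ(x)/φ(y) = exp((y² - x²)/2) ≤ exp(|x - y| T)`.
-/

noncomputable section

def stdNormalPDF (x : ℝ) : ℝ := (1 / Real.sqrt (2 * Real.pi)) * Real.exp (-x ^ 2 / 2)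

open Real

lemma stdNormalPDF_le_of_abs_le {x y : ℝ} (h : |x| ≤ |y|) :
    stdNormalPDF y ≤ stdNormalPDF x := by
  have hsq : x ^ 2 ≤ y ^ 2 := sq_le_sq.mpr h
  unfold stdNormalPDF
  gcongr

lemma stdNormalPDF_sqrt_two_mul_log {X : ℝ} (hX : 0 < X) (hlog : 0 ≤ log X) :
    stdNormalPDF √(2 * log X) = (√(2 * π) * X)⁻¹ := by
  rw [stdNormalPDF, sq_sqrt (by positivity), show -(2 * log X) / 2 = -log X by ring, exp_neg,
    exp_log hX, mul_inv]
  ring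

lemma stdNormalPDF_le_exp_mul {x y d T : ℝ} (hx : |x| ≤ T) (hy : |y| ≤ T)
    (hxy : |x - y| ≤ d) :
    stdNormalPDF x ≤ exp (d * T) * stdNormalPDF y := by
  have hsq : y ^ 2 - x ^ 2 ≤ 2 * d * T :=
    calc y ^ 2 - x ^ 2 ≤ |(x - y) * (x + y)| := by
          rw [show y ^ 2 - x ^ 2 = -((x - y) * (x + y)) by ring]; exact neg_le_abs _
      _ = |x - y| * |x + y| := abs_mul _ _
      _ ≤ d * (T + T) := by
          gcongr
          exacts [(abs_nonneg _).trans hxy, (abs_add_le _ _).trans (add_le_add hx hy)]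
      _ = 2 * d * T := by ring
  rw [stdNormalPDF, stdNormalPDF, mul_left_comm, ← exp_add]
  gcongr
  linarith

lemma abs_sub_stdNormalPDF_le_mul {u x T γ : ℝ} (hγ : 0 ≤ γ) (hxT : |x| ≤ T)
    (h : |u - stdNormalPDF x| ≤ γ * stdNormalPDF T) :
    |u - stdNormalPDF x| ≤ γ * stdNormalPDF x :=
  h.trans (by gcongr; exact stdNormalPDF_le_of_abs_le (hxT.trans (le_abs_self T)))

lemma one_add_eq_exp_mul_one_sub (ε : ℝ) :
    1 + (exp ε - 1) / (exp ε + 1) = exp ε * (1 - (exp ε - 1) / (exp ε + 1)) := by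
  field_simp
  ring

lemma le_exp_mul_of_abs_sub_le_mul {u v p q γ ε K : ℝ} (hγ0 : 0 ≤ γ)
    (hγ : 1 + γ = exp ε * (1 - γ)) (hK : 0 ≤ K) (hu : |u - p| ≤ γ * p) (hv : |v - q| ≤ γ * q)
    (hpq : p ≤ K * q) : u ≤ exp ε * K * v :=
  calc u ≤ (1 + γ) * p := by linarith [(abs_le.mp hu).2]
    _ ≤ (1 + γ) * (K * q) := by gcongr
    _ = exp ε * K * ((1 - γ) * q) := by rw [hγ]; ring
    _ ≤ exp ε * K * v := by gcongr; linarith [(abs_le.mp hv).1]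

theorem near_gaussian_density_smooth_general
    (n' : ℕ) (hn' : 1 ≤ n') (β σ c₁ ε γ : ℝ)
    (hβ : 0 < β) (hσ : 0 < σ) (hc₁ : 0 < c₁) (hε : 0 < ε)
    (hγ : γ = (Real.exp ε - 1) / (Real.exp ε + 1))
    (f : ℝ → ℝ)
    (hsup : ∀ x : ℝ, |f x - stdNormalPDF x| ≤ c₁ / Real.sqrt n')
    (w : ℝ)
    (hw : |w| + 4 * β / (σ * Real.sqrt n') ≤
        Real.sqrt (2 * Real.log (γ * Real.sqrt n' / (c₁ * Real.sqrt (2 * Real.pi)))))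
    (a b : ℝ) (ha : |a| ≤ 4 * β / σ) (hb : |b| ≤ 4 * β / σ) :
    f (w - a / Real.sqrt n') ≤
      Real.exp (ε + (8 * β / (σ * Real.sqrt n')) *
            Real.sqrt (2 * Real.log (γ * Real.sqrt n' / (c₁ * Real.sqrt (2 * Real.pi))))) *
        f (w - b / Real.sqrt n') := by
  set sn := √(n' : ℝ)
  set T := √(2 * log (γ * sn / (c₁ * √(2 * π))))
  have hsn : 0 < sn := sqrt_pos.mpr (by exact_mod_cast hn')
  have hγ0 : 0 < γ := hγ ▸ div_pos (by linarith [one_lt_exp_iff.mpr hε]) (by positivity)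
  have hT : 0 < T := by linarith [abs_nonneg w, show 0 < 4 * β / (σ * sn) by positivity]
  have hlog : 0 < log (γ * sn / (c₁ * √(2 * π))) := by linarith [sqrt_pos.mp hT]
  have hφT : c₁ / sn = γ * stdNormalPDF T := by
    rw [stdNormalPDF_sqrt_two_mul_log (by positivity) hlog.le]
    field_simp
  have hball (c : ℝ) (hc : |c| ≤ 4 * β / σ) : |w - c / sn| ≤ T :=
    calc |w - c / sn| ≤ |w| + |c / sn| := abs_sub _ _
      _ ≤ |w| + 4 * β / (σ * sn) := by rw [abs_div, abs_of_pos hsn, ← div_div]; gcongr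
      _ ≤ T := hw
  have hclose (c : ℝ) (hc : |c| ≤ 4 * β / σ) :
      |f (w - c / sn) - stdNormalPDF (w - c / sn)| ≤ γ * stdNormalPDF (w - c / sn) :=
    abs_sub_stdNormalPDF_le_mul hγ0.le (hball c hc) (hφT ▸ hsup (w - c / sn))
  have hdist : |(w - a / sn) - (w - b / sn)| ≤ 8 * β / (σ * sn) := by
    rw [show (w - a / sn) - (w - b / sn) = (b - a) / sn by ring, abs_div, abs_of_pos hsn,
      show 8 * β / (σ * sn) = (4 * β / σ + 4 * β / σ) / sn by ring]
    gcongr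
    exact (abs_sub _ _).trans (add_le_add hb ha)
  rw [exp_add]
  exact le_exp_mul_of_abs_sub_le_mul hγ0.le (hγ ▸ one_add_eq_exp_mul_one_sub ε) (exp_pos _).le
    (hclose a ha) (hclose b hb) (stdNormalPDF_le_exp_mul (hball a ha) (hball b hb) hdist)

/-- a smoothness estimate for densities that are uniformly close to the standard
normal density.  If `f` is a probability density with `sup_x |f(x) - φ(x)| ≤ c₁/√n'`, and `w`
satisfies `|w| + 4β/(σ√n') ≤ √(2 ln(γ√n'/(c₁√(2π))))` where `γ = (e^ε-1)/(e^ε+1)`, then for all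
`a, b` with `|a|, |b| ≤ 4β/σ`:
`f(w - a/√n') ≤ exp(ε + (8β/(σ√n'))·√(2 ln(γ√n'/(c₁√(2π))))) · f(w - b/√n')`. -/
theorem near_gaussian_density_smooth
    (n' : ℕ) (hn' : 1 ≤ n') (β σ c₁ ε γ : ℝ)
    (hβ : 0 < β) (hσ : 0 < σ) (hc₁ : 0 < c₁) (hε : 0 < ε) (hε1 : ε ≤ 1)
    (hγ : γ = (Real.exp ε - 1) / (Real.exp ε + 1))
    (f : ℝ → ℝ) (hf0 : ∀ x, 0 ≤ f x) (hf1 : (∫ x, f x) = 1)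
    (hsup : ∀ x : ℝ, |f x - stdNormalPDF x| ≤ c₁ / Real.sqrt n')
    (w : ℝ)
    (hw : |w| + 4 * β / (σ * Real.sqrt n') ≤
        Real.sqrt (2 * Real.log (γ * Real.sqrt n' / (c₁ * Real.sqrt (2 * Real.pi)))))
    (a b : ℝ) (ha : |a| ≤ 4 * β / σ) (hb : |b| ≤ 4 * β / σ) :
    f (w - a / Real.sqrt n') ≤
      Real.exp (ε + (8 * β / (σ * Real.sqrt n')) *
            Real.sqrt (2 * Real.log (γ * Real.sqrt n' / (c₁ * Real.sqrt (2 * Real.pi))))) *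
        f (w - b / Real.sqrt n') :=
  near_gaussian_density_smooth_general n' hn' β σ c₁ ε γ hβ hσ hc₁ hε hγ f hsup w hw a b ha hb
end
end

section
/- Let n' ≥ 1 be an integer, let β, σ, c₁, C > 0, let 0 < ε ≤ 1, and set γ = (e^ε − 1)/(e^ε + 1). Let V be a real-valued random variable whose cumulative distribution function F satisfies sup_{x∈ℝ} |F(x) − Φ(x)| ≤ C/√n', where Φ is the standard normal cdf. Let x₀ = √(2·ln(γ√n'/(c₁√(2π)))) − 4β/(σ√n') and suppose x₀ − 4β/(σ√n') > 0. Then for every a ∈ ℝ with |a| ≤ 4β/σ: Pr[|a/√n' + V| > x₀] ≤ √(2/π)·(1/(x₀ − 4β/(σ√n')))·exp(−(x₀ − 4β/(σ√n'))²/2) + 2C/√n'. -/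
open MeasureTheory

noncomputable section

/-- The cumulative distribution function of the standard normal distribution. -/
def stdNormalCDF (x : ℝ) : ℝ := ((ProbabilityTheory.gaussianReal 0 1) (Set.Iic x)).toReal

/-!
With `s = a/√n'`, the event `|s + V| > x₀` splits into the half-lines `V > x₀ - s` and
`V ≤ -x₀ - s`. On each of them the cdf of `V` is within `C/√n'` of `Φ`, and since
`|s| ≤ 4β/(σ√n')` both Gaussian tails are at most `1 - Φ(t)` with `t = x₀ - 4β/(σ√n') > 0`,
by monotonicity and the symmetry of `N(0,1)`. The Mills-ratio bound
`1 - Φ(t) ≤ e^{-t²/2} / (t√(2π))` finishes the estimate.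
-/

open ProbabilityTheory Set Filter

lemma integrable_exp_neg_sq_div_two : Integrable fun x : ℝ ↦ Real.exp (-x ^ 2 / 2) := by
  convert integrable_exp_neg_mul_sq (b := 1 / 2) (by norm_num) using 3
  ring

lemma integrable_mul_exp_neg_sq_div_two :
    Integrable fun x : ℝ ↦ x * Real.exp (-x ^ 2 / 2) := by
  convert integrable_mul_exp_neg_mul_sq (b := 1 / 2) (by norm_num) using 4
  ring

lemma integral_Ioi_mul_exp_neg_sq_div_two (t : ℝ) :
    ∫ x in Ioi t, x * Real.exp (-x ^ 2 / 2) = Real.exp (-t ^ 2 / 2) := by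
  have hderiv (x : ℝ) :
      HasDerivAt (fun x ↦ -Real.exp (-x ^ 2 / 2)) (x * Real.exp (-x ^ 2 / 2)) x := by
    have hinner : HasDerivAt (fun x : ℝ ↦ -x ^ 2 / 2) (-x) x :=
      ((hasDerivAt_pow 2 x).neg.div_const 2).congr_deriv (by norm_num; ring)
    exact hinner.exp.neg.congr_deriv (by ring)
  have hlim : Tendsto (fun x : ℝ ↦ -Real.exp (-x ^ 2 / 2)) atTop (nhds (-0)) := by
    refine (Real.tendsto_exp_atBot.comp ?_).neg
    exact (tendsto_neg_atTop_atBot.comp (tendsto_pow_atTop two_ne_zero)).atBot_div_const two_pos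
  rw [integral_Ioi_of_hasDerivAt_of_tendsto' (fun x _ ↦ hderiv x)
    integrable_mul_exp_neg_sq_div_two.integrableOn hlim]
  ring

lemma integral_Ioi_exp_neg_sq_div_two_le {t : ℝ} (ht : 0 < t) :
    ∫ x in Ioi t, Real.exp (-x ^ 2 / 2) ≤ Real.exp (-t ^ 2 / 2) / t := by
  calc ∫ x in Ioi t, Real.exp (-x ^ 2 / 2)
      ≤ ∫ x in Ioi t, t⁻¹ * (x * Real.exp (-x ^ 2 / 2)) := by
        refine setIntegral_mono_on integrable_exp_neg_sq_div_two.integrableOn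
          (integrable_mul_exp_neg_sq_div_two.integrableOn.const_mul _) measurableSet_Ioi
          fun x (hx : t < x) ↦ ?_
        rw [← mul_assoc]
        exact le_mul_of_one_le_left (Real.exp_pos _).le ((one_le_inv_mul₀ ht).2 hx.le)
    _ = Real.exp (-t ^ 2 / 2) / t := by
        rw [integral_const_mul, integral_Ioi_mul_exp_neg_sq_div_two, inv_mul_eq_div]

lemma gaussianReal_real_Ici_le {t : ℝ} (ht : 0 < t) :
    (gaussianReal 0 1).real (Ici t) ≤ (√(2 * Real.pi))⁻¹ * (Real.exp (-t ^ 2 / 2) / t) := by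
  have hpdf : gaussianPDFReal 0 1 = fun x ↦ (√(2 * Real.pi))⁻¹ * Real.exp (-x ^ 2 / 2) := by
    ext x; simp [gaussianPDFReal_def]
  rw [measureReal_def, gaussianReal_apply_eq_integral 0 one_ne_zero, hpdf,
    integral_Ici_eq_integral_Ioi, integral_const_mul, ENNReal.toReal_ofReal (by positivity)]
  gcongr
  exact integral_Ioi_exp_neg_sq_div_two_le ht

lemma gaussianReal_real_Iic_neg (y : ℝ) :
    (gaussianReal 0 1).real (Iic (-y)) = (gaussianReal 0 1).real (Ici y) := by
  conv_lhs => rw [← neg_zero, ← gaussianReal_map_neg]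
  rw [map_measureReal_apply measurable_neg measurableSet_Iic]
  congr 1
  ext x
  simp

lemma gaussianReal_real_Ioi_add_Iic_le {r s t : ℝ} (ht : 0 < t) (htrs : t ≤ r - |s|) :
    (gaussianReal 0 1).real (Ioi (r - s)) + (gaussianReal 0 1).real (Iic (-r - s)) ≤
      √(2 / Real.pi) * (1 / t) * Real.exp (-t ^ 2 / 2) := by
  have hupper : (gaussianReal 0 1).real (Ioi (r - s)) ≤ (gaussianReal 0 1).real (Ici t) :=
    measureReal_mono (Ioi_subset_Ici (by linarith [le_abs_self s]))
  have hlower : (gaussianReal 0 1).real (Iic (-r - s)) ≤ (gaussianReal 0 1).real (Ici t) := by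
    rw [show -r - s = -(r + s) by ring, gaussianReal_real_Iic_neg]
    exact measureReal_mono (Ici_subset_Ici.2 (by linarith [neg_abs_le s]))
  have hsqrt : √(2 / Real.pi) = 2 * (√(2 * Real.pi))⁻¹ := by
    rw [← Real.sqrt_inv, show (2 : ℝ) = √4 by norm_num, ← Real.sqrt_mul (by norm_num)]
    congr 1
    field_simp
    norm_num
  calc _ ≤ 2 * (gaussianReal 0 1).real (Ici t) := by linarith
    _ ≤ 2 * ((√(2 * Real.pi))⁻¹ * (Real.exp (-t ^ 2 / 2) / t)) := by
        gcongr; exact gaussianReal_real_Ici_le ht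
    _ = √(2 / Real.pi) * (1 / t) * Real.exp (-t ^ 2 / 2) := by rw [hsqrt]; ring

section KolmogorovDistance

variable {μ ν : Measure ℝ} [IsProbabilityMeasure μ] [IsProbabilityMeasure ν] {δ : ℝ}

lemma measureReal_Ioi_le_of_cdf_close (hF : ∀ x, |μ.real (Iic x) - ν.real (Iic x)| ≤ δ)
    (y : ℝ) : μ.real (Ioi y) ≤ ν.real (Ioi y) + δ := by
  rw [← compl_Iic, measureReal_compl measurableSet_Iic, measureReal_compl measurableSet_Iic]
  linarith [(abs_le.1 (hF y)).1, probReal_univ (μ := μ), probReal_univ (μ := ν)]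

lemma measureReal_lt_abs_add_le_of_cdf_close
    (hF : ∀ x, |μ.real (Iic x) - ν.real (Iic x)| ≤ δ) (r s : ℝ) :
    μ.real {x | r < |s + x|} ≤ ν.real (Ioi (r - s)) + ν.real (Iic (-r - s)) + 2 * δ := by
  have hsplit : {x | r < |s + x|} ⊆ Ioi (r - s) ∪ Iic (-r - s) := by
    intro x (hx : r < |s + x|)
    rcases lt_abs.1 hx with h | h
    · exact Or.inl (by simp only [mem_Ioi]; linarith)
    · exact Or.inr (by simp only [mem_Iic]; linarith)
  calc μ.real {x | r < |s + x|} ≤ μ.real (Ioi (r - s)) + μ.real (Iic (-r - s)) :=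
        (measureReal_mono hsplit).trans (measureReal_union_le _ _)
    _ ≤ _ := by
        linarith [measureReal_Ioi_le_of_cdf_close hF (r - s), (abs_le.1 (hF (-r - s))).2]

end KolmogorovDistance

theorem near_gaussian_tail_bound_general
    (n' : ℕ) (β σ C x₀ : ℝ)
    (μ : Measure ℝ) [IsProbabilityMeasure μ]
    (hF : ∀ x : ℝ, |(μ (Set.Iic x)).toReal - stdNormalCDF x| ≤ C / Real.sqrt n')
    (hx₀pos : 0 < x₀ - 4 * β / (σ * Real.sqrt n'))
    (a : ℝ) (ha : |a| ≤ 4 * β / σ) :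
    (μ {x : ℝ | x₀ < |a / Real.sqrt n' + x|}).toReal ≤
      Real.sqrt (2 / Real.pi) * (1 / (x₀ - 4 * β / (σ * Real.sqrt n'))) *
          Real.exp (-(x₀ - 4 * β / (σ * Real.sqrt n')) ^ 2 / 2) +
        2 * C / Real.sqrt n' := by
  have hshift : |a / √n'| ≤ 4 * β / (σ * √n') := by
    rw [abs_div, abs_of_nonneg (Real.sqrt_nonneg _), ← div_div]
    gcongr
  have hgauss := gaussianReal_real_Ioi_add_Iic_le (r := x₀) (s := a / √n') hx₀pos
    (by linarith)
  have htail := measureReal_lt_abs_add_le_of_cdf_close (ν := gaussianReal 0 1) hF x₀ (a / √n')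
  rw [← measureReal_def, mul_div_assoc 2 C]
  linarith

/-- a tail estimate for random variables whose cdf is uniformly close to the
standard normal cdf.  If `V` has distribution `μ` with cdf `F` satisfying
`sup_x |F(x) - Φ(x)| ≤ C/√n'`, `x₀ = √(2 ln(γ√n'/(c₁√(2π)))) - 4β/(σ√n')` with
`γ = (e^ε-1)/(e^ε+1)` and `x₀ - 4β/(σ√n') > 0`, then for every `a` with `|a| ≤ 4β/σ`:
`Pr[|a/√n' + V| > x₀] ≤ √(2/π)·(1/(x₀ - 4β/(σ√n')))·exp(-(x₀ - 4β/(σ√n'))²/2) + 2C/√n'`. -/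
theorem near_gaussian_tail_bound
    (n' : ℕ) (hn' : 1 ≤ n') (β σ c₁ C ε γ x₀ : ℝ)
    (hβ : 0 < β) (hσ : 0 < σ) (hc₁ : 0 < c₁) (hC : 0 < C) (hε : 0 < ε) (hε1 : ε ≤ 1)
    (hγ : γ = (Real.exp ε - 1) / (Real.exp ε + 1))
    (μ : Measure ℝ) [IsProbabilityMeasure μ]
    (hF : ∀ x : ℝ, |(μ (Set.Iic x)).toReal - stdNormalCDF x| ≤ C / Real.sqrt n')
    (hx₀ : x₀ = Real.sqrt (2 * Real.log (γ * Real.sqrt n' / (c₁ * Real.sqrt (2 * Real.pi)))) -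
        4 * β / (σ * Real.sqrt n'))
    (hx₀pos : 0 < x₀ - 4 * β / (σ * Real.sqrt n'))
    (a : ℝ) (ha : |a| ≤ 4 * β / σ) :
    (μ {x : ℝ | x₀ < |a / Real.sqrt n' + x|}).toReal ≤
      Real.sqrt (2 / Real.pi) * (1 / (x₀ - 4 * β / (σ * Real.sqrt n'))) *
          Real.exp (-(x₀ - 4 * β / (σ * Real.sqrt n')) ^ 2 / 2) +
        2 * C / Real.sqrt n' :=
  near_gaussian_tail_bound_general n' β σ C x₀ μ hF hx₀pos a ha
end
end

section
/- Let m ≥ 1, let α, ε > 0, and let σ₁², …, σ_m² > 0 with σ_ℓ² ≥ σ_min² > 0 for every ℓ ∈ [m]. Let f : ℝ^m → ℝ be the joint density of a random vector with independent components, the ℓ-th component distributed as N(0, σ_ℓ²). Suppose v ∈ ℝ^m satisfies |v_ℓ| ≤ ε·σ_min²/(2mα) − α for every ℓ ∈ [m], and let s, s' ∈ ℝ^m with |s_ℓ| ≤ α and |s'_ℓ| ≤ α for every ℓ ∈ [m]. Then f(v − s) ≤ e^ε · f(v − s'). -/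
/-!
The density is a product over coordinates, so it suffices to give each coordinate the budget
`ε / m`. In coordinate `ℓ` the log-ratio of the two factors is
`((v - s')² - (v - s)²) / (2σ²) = (s - s')(2v - s - s') / (2σ²) ≤ 4α(|v| + α) / (2σ²)`,
and the bound on `|v|` together with `σ_min² ≤ σ²` makes this at most `ε / m`.
-/

open Finset Real

lemma sq_sub_sub_sq_sub_le_of_abs_le {v s s' α : ℝ} (hs : |s| ≤ α) (hs' : |s'| ≤ α) :
    (v - s') ^ 2 - (v - s) ^ 2 ≤ 4 * α * (|v| + α) := by
  obtain ⟨hs₁, hs₂⟩ := abs_le.mp hs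
  obtain ⟨hs'₁, hs'₂⟩ := abs_le.mp hs'
  have hv₁ := neg_abs_le v
  have hv₂ := le_abs_self v
  calc (v - s') ^ 2 - (v - s) ^ 2 = (s - s') * (2 * v - s - s') := by ring
    _ ≤ |s - s'| * |2 * v - s - s'| := by rw [← abs_mul]; exact le_abs_self _
    _ ≤ (2 * α) * (2 * |v| + 2 * α) := by
        refine mul_le_mul (abs_le.mpr ⟨?_, ?_⟩) (abs_le.mpr ⟨?_, ?_⟩) (abs_nonneg _) ?_ <;>
          linarith
    _ = 4 * α * (|v| + α) := by ring

lemma gaussian_exponent_le_add_of_abs_le {v s s' α σ σmin δ : ℝ} (hα : 0 < α) (hδ : 0 ≤ δ)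
    (hσ : σ ≠ 0) (hσmin : σmin ^ 2 ≤ σ ^ 2)
    (hv : |v| ≤ δ * σmin ^ 2 / (2 * α) - α) (hs : |s| ≤ α) (hs' : |s'| ≤ α) :
    -(v - s) ^ 2 / (2 * σ ^ 2) ≤ δ + -(v - s') ^ 2 / (2 * σ ^ 2) := by
  have hσ2 : 0 < 2 * σ ^ 2 := by positivity
  have hdiff : (v - s') ^ 2 - (v - s) ^ 2 ≤ δ * (2 * σ ^ 2) :=
    calc (v - s') ^ 2 - (v - s) ^ 2 ≤ 4 * α * (|v| + α) := sq_sub_sub_sq_sub_le_of_abs_le hs hs'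
      _ ≤ 4 * α * (δ * σmin ^ 2 / (2 * α)) := by gcongr; linarith
      _ = δ * (2 * σmin ^ 2) := by field_simp; ring
      _ ≤ δ * (2 * σ ^ 2) := by gcongr
  rw [← sub_le_iff_le_add, ← sub_div, div_le_iff₀ hσ2]
  linarith

lemma prod_mul_exp_le_exp_sum_mul_prod {ι : Type*} (t : Finset ι) {c a b δ : ι → ℝ}
    (hc : ∀ i ∈ t, 0 ≤ c i) (hab : ∀ i ∈ t, a i ≤ δ i + b i) :
    ∏ i ∈ t, c i * exp (a i) ≤ exp (∑ i ∈ t, δ i) * ∏ i ∈ t, c i * exp (b i) := by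
  rw [exp_sum, ← prod_mul_distrib]
  refine prod_le_prod (fun i hi => by have := hc i hi; positivity) fun i hi => ?_
  calc c i * exp (a i) ≤ c i * exp (δ i + b i) := by gcongr; exacts [hc i hi, hab i hi]
    _ = exp (δ i) * (c i * exp (b i)) := by rw [exp_add]; ring

theorem gaussian_joint_density_smooth_general
    (m : ℕ) (hm : 1 ≤ m) (α ε : ℝ) (hα : 0 < α) (hε : 0 < ε)
    (σ : Fin m → ℝ) (hσ : ∀ ℓ, 0 < σ ℓ)
    (σmin : ℝ) (hσ2 : ∀ ℓ, σmin ^ 2 ≤ (σ ℓ) ^ 2)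
    (v s s' : Fin m → ℝ)
    (hv : ∀ ℓ, |v ℓ| ≤ ε * σmin ^ 2 / (2 * m * α) - α)
    (hs : ∀ ℓ, |s ℓ| ≤ α) (hs' : ∀ ℓ, |s' ℓ| ≤ α) :
    (∏ ℓ, (1 / (σ ℓ * Real.sqrt (2 * Real.pi))) *
        Real.exp (-(v ℓ - s ℓ) ^ 2 / (2 * (σ ℓ) ^ 2))) ≤
      Real.exp ε *
        ∏ ℓ, (1 / (σ ℓ * Real.sqrt (2 * Real.pi))) *
          Real.exp (-(v ℓ - s' ℓ) ^ 2 / (2 * (σ ℓ) ^ 2)) := by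
  have hm₀ : (m : ℝ) ≠ 0 := Nat.cast_ne_zero.mpr (by omega)
  have hbudget : ∑ _ℓ : Fin m, ε / m = ε := by
    rw [sum_const, card_univ, Fintype.card_fin, nsmul_eq_mul, mul_div_cancel₀ _ hm₀]
  rw [← hbudget]
  refine prod_mul_exp_le_exp_sum_mul_prod _ (fun ℓ _ => by have := hσ ℓ; positivity)
    fun ℓ _ => gaussian_exponent_le_add_of_abs_le hα (by positivity) (hσ ℓ).ne' (hσ2 ℓ) ?_
    (hs ℓ) (hs' ℓ)
  convert hv ℓ using 2
  ring

/-- smoothness of the joint density of independent centred normals.  Let `f` be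
the joint density of a random vector with independent components, the `ℓ`-th distributed as
`N(0, σ_ℓ²)` with `σ_ℓ² ≥ σ_min² > 0`.  If `|v_ℓ| ≤ ε σ_min²/(2mα) - α` for every `ℓ`, and
`s, s'` have all entries bounded by `α` in absolute value, then `f(v - s) ≤ e^ε · f(v - s')`. -/
theorem gaussian_joint_density_smooth
    (m : ℕ) (hm : 1 ≤ m) (α ε : ℝ) (hα : 0 < α) (hε : 0 < ε)
    (σ : Fin m → ℝ) (hσ : ∀ ℓ, 0 < σ ℓ)
    (σmin : ℝ) (hσmin : 0 < σmin) (hσ2 : ∀ ℓ, σmin ^ 2 ≤ (σ ℓ) ^ 2)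
    (v s s' : Fin m → ℝ)
    (hv : ∀ ℓ, |v ℓ| ≤ ε * σmin ^ 2 / (2 * m * α) - α)
    (hs : ∀ ℓ, |s ℓ| ≤ α) (hs' : ∀ ℓ, |s' ℓ| ≤ α) :
    (∏ ℓ, (1 / (σ ℓ * Real.sqrt (2 * Real.pi))) *
        Real.exp (-(v ℓ - s ℓ) ^ 2 / (2 * (σ ℓ) ^ 2))) ≤
      Real.exp ε *
        ∏ ℓ, (1 / (σ ℓ * Real.sqrt (2 * Real.pi))) *
          Real.exp (-(v ℓ - s' ℓ) ^ 2 / (2 * (σ ℓ) ^ 2)) :=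
  gaussian_joint_density_smooth_general m hm α ε hα hε σ hσ σmin hσ2 v s s' hv hs hs'
end

section
/- Let M : T^n → S be a (k,r)-persistent ε-Bayes-Nash truthful mechanism, and let P be the deterrent payment scheme with m verifications and fine d that charges player i the amount d if player i is among the m verified players and was caught lying, and 0 otherwise. If (m/n)·d ≥ r·ε, then M with P is weakly (k,r)-persistent Bayes-Nash truthful: for every I ⊆ [n] with |I| ≤ k, every announced types t'_I ∈ T^{|I|}, every coalition C ⊆ [n]\I with |C| ≤ r, every true types t_C ∈ T^{|C|}, and every announced types t'_C ∈ T^{|C|}, Σ_{i∈C} E_{t_J, X}[u_i(t_i, M(t_C, t'_I, t_J)) − P_i((t_C, t'_I, t_J), X)] ≥ Σ_{i∈C} E_{t_J, X}[u_i(t_i, M(t'_C, t'_I, t_J)) − P_i((t'_C, t'_I, t_J), X)], where J = [n]\(I ∪ C), t_J ∼ 𝒯^{|J|}, and X is the outcome of uniformly sampling m distinct players from [n] and recording for each sampled player whether his announced type equals his true type. -/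
open MeasureTheory

noncomputable section

/-- `(k,r)`-persistent `ε`-Bayes-Nash truthfulness of a mechanism. -/
def PersistentTruthful {n : ℕ} {T S : Type*} [MeasurableSpace T] (𝒯 : Measure T)
    (M : (Fin n → T) → S) (u : Fin n → T → S → ℝ) (k r : ℕ) (ε : ℝ) : Prop :=
  ∀ (I : Finset (Fin n)), I.card ≤ k → ∀ tI : Fin n → T,
    ∀ (C : Finset (Fin n)), Disjoint C I → C.card ≤ r →
      ∀ (tC tC' : Fin n → T), ∀ i ∈ C,
        (∫ tJ, u i (tC i) (M (fun j => if j ∈ C then tC j else if j ∈ I then tI j else tJ j))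
            ∂(Measure.pi (fun _ : Fin n => 𝒯))) ≥
          (∫ tJ, u i (tC i) (M (fun j => if j ∈ C then tC' j else if j ∈ I then tI j else tJ j))
              ∂(Measure.pi (fun _ : Fin n => 𝒯))) - ε

open Classical in
/-- The expected fine paid by player `i` under the deterrent payment scheme with `mver`
verifications and fine `d`: the set of verified players is a uniformly random `mver`-element
subset of the `n` players, and player `i` pays `d` exactly when `i` is verified and is caught
lying (`caught`). -/
def expectedFine (n mver : ℕ) (d : ℝ) (i : Fin n) (caught : Prop) : ℝ :=
  (∑ A ∈ Finset.powersetCard mver (Finset.univ : Finset (Fin n)),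
      if i ∈ A ∧ caught then d else 0) /
    ((Finset.powersetCard mver (Finset.univ : Finset (Fin n))).card : ℝ)

/-! A verified set is a uniformly random `mver`-subset of the players, so a liar is caught with
probability `mver / n` and pays `(mver / n) * d` in expectation. If some member of the coalition
lies, its total fine is therefore at least `(mver / n) * d ≥ r * ε`, while `ε`-truthfulness caps
each member's gain from the joint misreport by `ε`, so the total gain by `#C * ε ≤ r * ε`.
If nobody in the coalition lies, the announced profile is the truthful one. -/

open Finset

lemma card_filter_mem_powersetCard {α : Type*} [DecidableEq α] {s : Finset α} {a : α}
    (ha : a ∈ s) (m : ℕ) : #{A ∈ powersetCard (m + 1) s | a ∈ A} = (#s - 1).choose m := by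
  simpa using card_filter_powersetCard_subset {a} s (m + 1) (by simpa using ha) (by simp)

lemma expectedFine_of_not_caught {n m : ℕ} (d : ℝ) (i : Fin n) {caught : Prop} (hc : ¬caught) :
    expectedFine n m d i caught = 0 := by
  simp [expectedFine, hc]

lemma expectedFine_of_caught {n m : ℕ} (hm : m ≤ n) (d : ℝ) (i : Fin n) {caught : Prop}
    (hc : caught) : expectedFine n m d i caught = m / n * d := by
  obtain _ | m := m
  · simp [expectedFine]
  obtain ⟨n, rfl⟩ : ∃ n', n = n' + 1 := ⟨n - 1, by omega⟩
  have hchoose : ((n + 1 : ℕ) : ℝ) * n.choose m = (n + 1).choose (m + 1) * (m + 1 : ℕ) := by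
    exact_mod_cast Nat.add_one_mul_choose_eq n m
  have hpos : (0 : ℝ) < (n + 1).choose (m + 1) := by exact_mod_cast Nat.choose_pos hm
  simp only [expectedFine, hc, and_true]
  rw [← sum_filter, sum_const, nsmul_eq_mul, card_filter_mem_powersetCard (mem_univ i),
    card_powersetCard, card_univ, Fintype.card_fin, Nat.add_sub_cancel]
  field_simp
  linear_combination d * hchoose

lemma sum_expectedFine {n m : ℕ} (hm : m ≤ n) (d : ℝ) (C : Finset (Fin n)) (lies : Fin n → Prop)
    [DecidablePred lies] :
    ∑ i ∈ C, expectedFine n m d i (lies i) = #{i ∈ C | lies i} * (m / n * d) := by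
  rw [← nsmul_eq_mul, ← sum_const, sum_filter]
  refine sum_congr rfl fun i _ => ?_
  split_ifs with hi
  · exact expectedFine_of_caught hm d i hi
  · exact expectedFine_of_not_caught d i hi

lemma PersistentTruthful.sum_le_add_card_mul {n : ℕ} {T S : Type*} [MeasurableSpace T]
    {𝒯 : Measure T} {M : (Fin n → T) → S} {u : Fin n → T → S → ℝ} {k r : ℕ} {ε : ℝ}
    (hM : PersistentTruthful 𝒯 M u k r ε) {I : Finset (Fin n)} (hI : #I ≤ k) (tI : Fin n → T)
    {C : Finset (Fin n)} (hCI : Disjoint C I) (hC : #C ≤ r) (tC tC' : Fin n → T) :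
    ∑ i ∈ C, (∫ tJ, u i (tC i) (M fun j => if j ∈ C then tC' j else if j ∈ I then tI j else tJ j)
        ∂Measure.pi fun _ => 𝒯) ≤
      ∑ i ∈ C, (∫ tJ, u i (tC i) (M fun j => if j ∈ C then tC j else if j ∈ I then tI j else tJ j)
        ∂Measure.pi fun _ => 𝒯) + (#C : ℝ) * ε := by
  rw [← nsmul_eq_mul, ← sum_const, ← sum_add_distrib]
  exact sum_le_sum fun i hi => by linarith [hM I hI tI C hCI hC tC tC' i hi]

theorem deterrent_scheme_weakly_persistent_truthful_general
    {n : ℕ} {T S : Type*} [MeasurableSpace T]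
    (𝒯 : Measure T)
    (M : (Fin n → T) → S) (u : Fin n → T → S → ℝ)
    (k r mver : ℕ) (ε d : ℝ) (hε : 0 ≤ ε) (hmver : mver ≤ n)
    (hM : PersistentTruthful 𝒯 M u k r ε)
    (hfine : (r : ℝ) * ε ≤ ((mver : ℝ) / n) * d) :
    ∀ (I : Finset (Fin n)), I.card ≤ k → ∀ tI : Fin n → T,
      ∀ (C : Finset (Fin n)), Disjoint C I → C.card ≤ r →
        ∀ (tC tC' : Fin n → T),
          (∑ i ∈ C,
              ((∫ tJ, u i (tC i)
                    (M (fun j => if j ∈ C then tC j else if j ∈ I then tI j else tJ j))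
                  ∂(Measure.pi (fun _ : Fin n => 𝒯))) -
                expectedFine n mver d i (tC i ≠ tC i))) ≥
            ∑ i ∈ C,
              ((∫ tJ, u i (tC i)
                    (M (fun j => if j ∈ C then tC' j else if j ∈ I then tI j else tJ j))
                  ∂(Measure.pi (fun _ : Fin n => 𝒯))) -
                expectedFine n mver d i (tC' i ≠ tC i)) := by
  intro I hI tI C hCI hC tC tC'
  classical
  rw [ge_iff_le, sum_sub_distrib, sum_sub_distrib, sum_expectedFine hmver,
    sum_expectedFine hmver]
  obtain hhonest | hliar := ({i ∈ C | tC' i ≠ tC i} : Finset _).eq_empty_or_nonempty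
  · have htC : ∀ i ∈ C, tC' i = tC i := by simpa [filter_eq_empty_iff] using hhonest
    simp +contextual [htC]
  · have hgain := hM.sum_le_add_card_mul hI tI hCI hC tC tC'
    have hcard : (#C : ℝ) * ε ≤ r * ε := by gcongr
    have hfine_nonneg : 0 ≤ (mver : ℝ) / n * d := (by positivity : (0 : ℝ) ≤ r * ε).trans hfine
    have hliars : (1 : ℝ) ≤ #{i ∈ C | tC' i ≠ tC i} := by exact_mod_cast hliar.card_pos
    have htruthful : #{i ∈ C | tC i ≠ tC i} = 0 := by simp
    rw [htruthful, Nat.cast_zero, zero_mul]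
    linarith [le_mul_of_one_le_left hfine_nonneg hliars]

/-- a `(k,r)`-persistent `ε`-Bayes-Nash truthful mechanism, together with a
deterrent payment scheme with `mver` verifications and fine `d` satisfying `(mver/n)·d ≥ rε`,
is weakly `(k,r)`-persistent Bayes-Nash truthful: no coalition of at most `r` players (in the
presence of up to `k` arbitrarily deviating players) can increase its total expected quasilinear
utility by jointly mis-reporting. -/
theorem deterrent_scheme_weakly_persistent_truthful
    {n : ℕ} {T S : Type*} [MeasurableSpace T]
    (𝒯 : Measure T) [IsProbabilityMeasure 𝒯]
    (M : (Fin n → T) → S) (u : Fin n → T → S → ℝ)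
    (k r mver : ℕ) (ε d : ℝ) (hε : 0 ≤ ε) (hd : 0 ≤ d) (hmver : mver ≤ n)
    (hM : PersistentTruthful 𝒯 M u k r ε)
    (hfine : (r : ℝ) * ε ≤ ((mver : ℝ) / n) * d) :
    ∀ (I : Finset (Fin n)), I.card ≤ k → ∀ tI : Fin n → T,
      ∀ (C : Finset (Fin n)), Disjoint C I → C.card ≤ r →
        ∀ (tC tC' : Fin n → T),
          (∑ i ∈ C,
              ((∫ tJ, u i (tC i)
                    (M (fun j => if j ∈ C then tC j else if j ∈ I then tI j else tJ j))
                  ∂(Measure.pi (fun _ : Fin n => 𝒯))) -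
                expectedFine n mver d i (tC i ≠ tC i))) ≥
            ∑ i ∈ C,
              ((∫ tJ, u i (tC i)
                    (M (fun j => if j ∈ C then tC' j else if j ∈ I then tI j else tJ j))
                  ∂(Measure.pi (fun _ : Fin n => 𝒯))) -
                expectedFine n mver d i (tC' i ≠ tC i)) :=
  deterrent_scheme_weakly_persistent_truthful_general 𝒯 M u k r mver ε d hε hmver hM hfine
end
end

section
/- Let M : T^n → S be a (k,1)-persistent ε-Bayes-Nash truthful mechanism, and let P be the deterrent payment scheme with m verifications and fine d that charges player i the amount d if player i is among the m verified players and was caught lying, and 0 otherwise. If (m/n)·d ≥ ε, then M with P is k-tolerant Bayes-Nash truthful: for every I ⊆ [n] with |I| ≤ k, every announced types t'_I ∈ T^{|I|}, every player i ∉ I, every true type t_i ∈ T, and every announced type t_i' ∈ T, E_{t_J, X}[u_i(t_i, M(t_i, t'_I, t_J)) − P_i((t_i, t'_I, t_J), X)] ≥ E_{t_J, X}[u_i(t_i, M(t_i', t'_I, t_J)) − P_i((t_i', t'_I, t_J), X)], where J = [n]\(I ∪ {i}), t_J ∼ 𝒯^{|J|}, and X is the outcome of uniformly sampling m distinct players from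 [n] and recording for each sampled player whether his announced type equals his true type. -/
/-!
A fixed player lies in exactly a fraction `m / n` of the `m`-element subsets of the `n` players,
so a liar is verified with probability `m / n` and expects to pay `(m / n) · d ≥ ε`, while a
truthful player pays nothing. This fine outweighs the at most `ε` that `(k,1)`-persistent
`ε`-Bayes-Nash truthfulness lets a lie gain, whatever the `k` other deviators announce.
-/

open MeasureTheory

noncomputable section

open Finset

theorem card_filter_mem_powersetCard_mul_card {α : Type*} [DecidableEq α] {s : Finset α} {a : α}
    (ha : a ∈ s) (m : ℕ) :
    #{A ∈ s.powersetCard m | a ∈ A} * #s = m * #(s.powersetCard m) := by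
  cases m with
  | zero => simp
  | succ k =>
    have hcount : #{A ∈ s.powersetCard (k + 1) | a ∈ A} = (#s - 1).choose k := by
      simpa using card_filter_powersetCard_subset {a} s (k + 1) (by simpa using ha) (by simp)
    obtain ⟨r, hr⟩ : ∃ r, #s = r + 1 := ⟨#s - 1, by have := card_pos.2 ⟨a, ha⟩; omega⟩
    rw [hcount, card_powersetCard, hr, Nat.add_sub_cancel, mul_comm, Nat.add_one_mul_choose_eq,
      mul_comm]

theorem expectedFine_of_not {n mver : ℕ} {d : ℝ} {i : Fin n} {caught : Prop} (h : ¬caught) :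
    expectedFine n mver d i caught = 0 := by
  simp [expectedFine, h]

theorem expectedFine_of {n mver : ℕ} {d : ℝ} {i : Fin n} {caught : Prop} (h : caught)
    (hmver : mver ≤ n) :
    expectedFine n mver d i caught = (mver / n : ℝ) * d := by
  classical
  have hn : (n : ℝ) ≠ 0 := by exact_mod_cast i.pos.ne'
  have hsets : (#(powersetCard mver (univ : Finset (Fin n))) : ℝ) ≠ 0 := by
    rw [card_powersetCard, card_univ, Fintype.card_fin]
    exact_mod_cast (Nat.choose_pos hmver).ne'
  have hcount : (#{A ∈ powersetCard mver (univ : Finset (Fin n)) | i ∈ A} : ℝ) * n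
      = mver * #(powersetCard mver (univ : Finset (Fin n))) := by
    have := card_filter_mem_powersetCard_mul_card (mem_univ i) mver
    rw [card_univ, Fintype.card_fin] at this
    exact_mod_cast this
  have hsum : ∑ A ∈ powersetCard mver (univ : Finset (Fin n)), (if i ∈ A ∧ caught then d else 0)
      = #{A ∈ powersetCard mver univ | i ∈ A} * d := by
    simp only [h, and_true, ← sum_filter, sum_const, nsmul_eq_mul]
  rw [expectedFine, hsum]
  field_simp
  linear_combination d * hcount

theorem deterrent_scheme_tolerant_truthful_general
    {n : ℕ} {T S : Type*} [MeasurableSpace T]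
    (𝒯 : Measure T) [IsProbabilityMeasure 𝒯]
    (M : (Fin n → T) → S) (u : Fin n → T → S → ℝ)
    (k mver : ℕ) (ε d : ℝ) (hmver : mver ≤ n)
    (hM : ∀ (I : Finset (Fin n)), I.card ≤ k → ∀ tI : Fin n → T,
      ∀ i : Fin n, i ∉ I → ∀ ti ti' : T,
        (∫ tJ, u i ti (M (fun j => if j = i then ti else if j ∈ I then tI j else tJ j))
            ∂(Measure.pi (fun _ : Fin n => 𝒯))) ≥
          (∫ tJ, u i ti (M (fun j => if j = i then ti' else if j ∈ I then tI j else tJ j))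
              ∂(Measure.pi (fun _ : Fin n => 𝒯))) - ε)
    (hfine : ε ≤ ((mver : ℝ) / n) * d) :
    ∀ (I : Finset (Fin n)), I.card ≤ k → ∀ tI : Fin n → T,
      ∀ i : Fin n, i ∉ I → ∀ ti ti' : T,
        ((∫ tJ, u i ti (M (fun j => if j = i then ti else if j ∈ I then tI j else tJ j))
              ∂(Measure.pi (fun _ : Fin n => 𝒯))) -
            expectedFine n mver d i (ti ≠ ti)) ≥
          ((∫ tJ, u i ti (M (fun j => if j = i then ti' else if j ∈ I then tI j else tJ j))
                ∂(Measure.pi (fun _ : Fin n => 𝒯))) -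
              expectedFine n mver d i (ti' ≠ ti)) := by
  intro I hI tI i hiI ti ti'
  by_cases hlie : ti' = ti
  · rw [hlie]
  rw [expectedFine_of_not (not_not.2 rfl), expectedFine_of hlie hmver]
  linarith [hM I hI tI i hiI ti ti']

/-- a `(k,1)`-persistent `ε`-Bayes-Nash truthful mechanism, together with a
deterrent payment scheme with `mver` verifications and fine `d` satisfying `(mver/n)·d ≥ ε`,
is `k`-tolerant Bayes-Nash truthful: even when up to `k` players announce arbitrary types, no
single player can increase his expected quasilinear utility by mis-reporting. -/
theorem deterrent_scheme_tolerant_truthful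
    {n : ℕ} {T S : Type*} [MeasurableSpace T]
    (𝒯 : Measure T) [IsProbabilityMeasure 𝒯]
    (M : (Fin n → T) → S) (u : Fin n → T → S → ℝ)
    (k mver : ℕ) (ε d : ℝ) (hε : 0 ≤ ε) (hd : 0 ≤ d) (hmver : mver ≤ n)
    (hM : ∀ (I : Finset (Fin n)), I.card ≤ k → ∀ tI : Fin n → T,
      ∀ i : Fin n, i ∉ I → ∀ ti ti' : T,
        (∫ tJ, u i ti (M (fun j => if j = i then ti else if j ∈ I then tI j else tJ j))
            ∂(Measure.pi (fun _ : Fin n => 𝒯))) ≥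
          (∫ tJ, u i ti (M (fun j => if j = i then ti' else if j ∈ I then tI j else tJ j))
              ∂(Measure.pi (fun _ : Fin n => 𝒯))) - ε)
    (hfine : ε ≤ ((mver : ℝ) / n) * d) :
    ∀ (I : Finset (Fin n)), I.card ≤ k → ∀ tI : Fin n → T,
      ∀ i : Fin n, i ∉ I → ∀ ti ti' : T,
        ((∫ tJ, u i ti (M (fun j => if j = i then ti else if j ∈ I then tI j else tJ j))
              ∂(Measure.pi (fun _ : Fin n => 𝒯))) -
            expectedFine n mver d i (ti ≠ ti)) ≥
          ((∫ tJ, u i ti (M (fun j => if j = i then ti' else if j ∈ I then tI j else tJ j))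
                ∂(Measure.pi (fun _ : Fin n => 𝒯))) -
              expectedFine n mver d i (ti' ≠ ti)) :=
  deterrent_scheme_tolerant_truthful_general 𝒯 M u k mver ε d hmver hM hfine
end
end
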